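/- For any n ≥ 1, the (q_n − 1)-th conjugate of s_n equals w_{n-1} v_{n-2} and the (q_{n-1} − 1)-th conjugate of s_n equals v_{n-2} w_{n-1}, where C_k(x_1 x_2 ⋯ x_m) = x_{k+1} ⋯ x_m x_1 ⋯ x_k. -/

import Mathlib

/-!
The last letter of `sₘ` is `b` exactly when `m` is odd (it is inherited from `sₘ₋₂`), and
`|sₘ| = qₘ`. Write `sₙ = sₙ₋₁ r` with `r = sₙ₋₁^(dₙ - 1) sₙ₋₂`, split `sₙ₋₁ = u x` and `r = r' y`
off their last letters. The letter prepended in `wₙ₋₁` is `y` and the one prepended in `vₙ₋₂` is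
`x`, so `wₙ₋₁ = y u` and `vₙ₋₂ = x r'`. Conjugating `u x r' y` by `|u x r'| = qₙ - 1` gives
`y u x r'`, and by `|u| = qₙ₋₁ - 1` gives `x r' y u`.
-/

/-- Letters: `a` is `false`, `b` is `true`. -/
abbrev Word := List Bool

/-- `wpow w k` is the `k`-fold concatenation `w^k`. -/
def wpow (w : Word) (k : ℕ) : Word := (List.replicate k w).flatten

/-- The `k`-th conjugate of a word. -/
def conj (k : ℕ) (u : Word) : Word := u.drop k ++ u.take k

theorem Int.le_induction_two_step {P : ℤ → Prop} {m : ℤ} (h₀ : P m) (h₁ : P (m + 1))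
    (step : ∀ n, m + 2 ≤ n → P (n - 2) → P (n - 1) → P n) : ∀ n, m ≤ n → P n := by
  suffices ∀ n, m ≤ n → P n ∧ P (n + 1) from fun n hn => (this n hn).1
  intro n hn
  induction n, hn using Int.leInduction with
  | base => exact ⟨h₀, h₁⟩
  | succ n hn ih =>
    refine ⟨ih.2, ?_⟩
    have h := step (n + 2) (by omega)
    rw [add_sub_cancel_right, show n + 2 - 1 = n + 1 by ring] at h
    rw [add_assoc, one_add_one_eq_two]
    exact h ih.1 ih.2

lemma wpow_succ (u : Word) (k : ℕ) : wpow u (k + 1) = u ++ wpow u k := by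
  simp [wpow, List.replicate_succ]

lemma wpow_of_pos (u : Word) {k : ℕ} (hk : 0 < k) : wpow u k = u ++ wpow u (k - 1) := by
  rw [← wpow_succ, Nat.sub_add_cancel hk]

lemma length_wpow (u : Word) (k : ℕ) : (wpow u k).length = k * u.length := by
  simp [wpow, List.sum_replicate]

lemma conj_length_append (u r : Word) : conj u.length (u ++ r) = r ++ u := by
  simp [conj]

lemma ite_odd_eq_singleton (m : ℤ) :
    (if Odd m then [false] else [true] : Word) = [decide (Odd (m + 1))] := by
  by_cases h : Odd m <;> simp_all

lemma getLast?_standard_word {d : ℤ → ℕ} {s : ℤ → Word}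
    (hs1 : s (-1) = [true]) (hs0 : s 0 = [false])
    (hs : ∀ n : ℤ, 1 ≤ n → s n = wpow (s (n - 1)) (d n) ++ s (n - 2)) :
    ∀ m, -1 ≤ m → (s m).getLast? = some (decide (Odd m)) := by
  refine Int.le_induction_two_step (by simp [hs1]) (by simp [hs0]) fun n hn h₂ _ => ?_
  simp [hs n (by omega), List.getLast?_append, h₂]

lemma length_standard_word {d : ℤ → ℕ} {s : ℤ → Word} {q : ℤ → ℕ}
    (hs1 : s (-1) = [true]) (hs0 : s 0 = [false])
    (hs : ∀ n : ℤ, 1 ≤ n → s n = wpow (s (n - 1)) (d n) ++ s (n - 2))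
    (hq1 : q (-1) = 1) (hq0 : q 0 = 1)
    (hq : ∀ n : ℤ, 1 ≤ n → q n = d n * q (n - 1) + q (n - 2)) :
    ∀ m, -1 ≤ m → (s m).length = q m := by
  refine Int.le_induction_two_step (by simp [hs1, hq1]) (by simp [hs0, hq0]) fun n hn h₂ h₁ => ?_
  rw [hs n (by omega), hq n (by omega), List.length_append, length_wpow, h₁, h₂]

theorem conjugates_of_standard_word_general (d : ℤ → ℕ) (s : ℤ → Word)
    (hd : ∀ n : ℤ, 1 ≤ n → 1 ≤ d n)
    (hs1 : s (-1) = [true]) (hs0 : s 0 = [false])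
    (hs : ∀ n : ℤ, 1 ≤ n → s n = wpow (s (n - 1)) (d n) ++ s (n - 2))
    (w : ℤ → Word)
    (hw : ∀ n : ℤ, 0 ≤ n → w n = (if Odd n then [false] else [true]) ++ (s n).dropLast)
    (v : ℤ → Word)
    (hv : ∀ n : ℤ, -1 ≤ n → v n = (if Odd n then [false] else [true]) ++ (wpow (s (n + 1)) (d (n + 2) - 1) ++ s n).dropLast)
    (q : ℤ → ℕ) (hq1 : q (-1) = 1) (hq0 : q 0 = 1)
    (hq : ∀ n : ℤ, 1 ≤ n → q n = d n * q (n - 1) + q (n - 2)) :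
    ∀ n : ℤ, 1 ≤ n →
      conj (q n - 1) (s n) = w (n - 1) ++ v (n - 2) ∧
      conj (q (n - 1) - 1) (s n) = v (n - 2) ++ w (n - 1) := by
  intro n hn
  have hlast := getLast?_standard_word hs1 hs0 hs
  have hlen := length_standard_word hs1 hs0 hs hq1 hq0 hq
  set r := wpow (s (n - 1)) (d n - 1) ++ s (n - 2) with hr_def
  have hsn : s n = s (n - 1) ++ r := by
    rw [hs n hn, wpow_of_pos _ (hd n hn), List.append_assoc]
  obtain ⟨u, hu⟩ := List.getLast?_eq_some_iff.1 (hlast (n - 1) (by omega))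
  obtain ⟨r', hr⟩ : ∃ r', r = r' ++ [decide (Odd n)] := by
    refine List.getLast?_eq_some_iff.1 ?_
    simp [r, List.getLast?_append, hlast (n - 2) (by omega)]
  have hwu : w (n - 1) = decide (Odd n) :: u := by
    rw [hw _ (by omega), ite_odd_eq_singleton, sub_add_cancel, hu, List.dropLast_concat]
    rfl
  have hvr : v (n - 2) = decide (Odd (n - 1)) :: r' := by
    rw [hv _ (by omega), ite_odd_eq_singleton, show n - 2 + 1 = n - 1 by ring,
      show n - 2 + 2 = n by ring, ← hr_def, hr, List.dropLast_concat]
    rfl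
  constructor
  · have hqn : q n - 1 = (u ++ [decide (Odd (n - 1))] ++ r').length := by
      rw [← hlen n (by omega), hsn, hu, hr]; simp
    rw [hqn, hsn, hu, hr, ← List.append_assoc, conj_length_append, hwu, hvr]
    simp
  · rw [← hlen (n - 1) (by omega), hsn, hu, hr, List.length_append, List.length_singleton,
      Nat.add_sub_cancel, List.append_assoc, conj_length_append, hwu, hvr]
    simp

/-- For any `n ≥ 1`, `C_{qₙ - 1}(sₙ) = wₙ₋₁ vₙ₋₂` and `C_{qₙ₋₁ - 1}(sₙ) = vₙ₋₂ wₙ₋₁`. -/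
theorem conjugates_of_standard_word (d : ℤ → ℕ) (s : ℤ → Word)
    (hd : ∀ n : ℤ, 1 ≤ n → 1 ≤ d n)
    (hs1 : s (-1) = [true]) (hs0 : s 0 = [false])
    (hs : ∀ n : ℤ, 1 ≤ n → s n = wpow (s (n - 1)) (d n) ++ s (n - 2))
    (w : ℤ → Word)
    (hw : ∀ n : ℤ, 0 ≤ n → w n = (if Odd n then [false] else [true]) ++ (s n).dropLast)
    (hwm1 : w (-1) = [false]) (hwm2 : w (-2) = [])
    (v : ℤ → Word)
    (hv : ∀ n : ℤ, -1 ≤ n → v n = (if Odd n then [false] else [true]) ++ (wpow (s (n + 1)) (d (n + 2) - 1) ++ s n).dropLast)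
    (hvm2 : v (-2) = [])
    (q : ℤ → ℕ) (hq1 : q (-1) = 1) (hq0 : q 0 = 1)
    (hq : ∀ n : ℤ, 1 ≤ n → q n = d n * q (n - 1) + q (n - 2)) :
    ∀ n : ℤ, 1 ≤ n →
      conj (q n - 1) (s n) = w (n - 1) ++ v (n - 2) ∧
      conj (q (n - 1) - 1) (s n) = v (n - 2) ++ w (n - 1) :=
  conjugates_of_standard_word_general d s hd hs1 hs0 hs w hw v hv q hq1 hq0 hq
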